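/- arXiv:math/0506203 — 6 statements merged into one kernel-verified Lean document; each statement's English description precedes it below -/
import Mathlib

section
/- In the semigroup of transformations of ℤ generated by s and f, the relation f³ = f holds, i.e., applying f three times equals applying f once, as maps ℤ → ℤ. -/
/-- Every nonzero integer is a power of two times an odd integer. -/
lemma exists_pow_mul_odd (x : ℤ) (hx : x ≠ 0) :
    ∃ (n : ℕ) (m : ℤ), Odd m ∧ x = 2 ^ n * m := by
  obtain ⟨k, hk⟩ : ∃ k, x.natAbs = k := ⟨_, rfl⟩
  induction k using Nat.strong_induction_on generalizing x with
  | _ k ih =>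
    rcases Int.even_or_odd x with ⟨y, hy⟩ | hodd
    · have hy2 : x = 2 * y := by omega
      have hy0 : y ≠ 0 := by omega
      have hlt : y.natAbs < k := by omega
      obtain ⟨n, m, hm, hrep⟩ := ih y.natAbs hlt y hy0 rfl
      exact ⟨n + 1, m, hm, by rw [hy2, hrep]; ring⟩
    · exact ⟨0, x, hodd, by ring⟩

/-- For any function `f : ℤ → ℤ` satisfying the defining clauses of the
transformation `f` (i.e. `f x = x - 2^n - 1` when `x ≡ 3·2^n (mod 2^(n+2))`,
`f x = x + 3·2^n - 1` when `x ≡ 2^n (mod 2^(n+2))`, and `f 0 = -1`),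
the relation `f³ = f` holds as maps `ℤ → ℤ`. -/
theorem fZ_cubed_eq_fZ (f : ℤ → ℤ)
    (h0 : f 0 = -1)
    (h3 : ∀ (x : ℤ) (n : ℕ), x ≡ 3 * 2 ^ n [ZMOD (2 ^ (n + 2) : ℤ)] →
      f x = x - 2 ^ n - 1)
    (h1 : ∀ (x : ℤ) (n : ℕ), x ≡ 2 ^ n [ZMOD (2 ^ (n + 2) : ℤ)] →
      f x = x + 3 * 2 ^ n - 1) :
    ∀ x : ℤ, f (f (f x)) = f x := by
  -- On odd integers, f ∘ f = id.
  have key : ∀ y : ℤ, Odd y → f (f y) = y := by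
    intro y hy
    obtain ⟨t, ht⟩ := hy
    have h4 : y % 4 = 1 ∨ y % 4 = 3 := by omega
    rcases h4 with h4 | h4
    · have hc : y ≡ 2 ^ 0 [ZMOD (2 ^ (0 + 2) : ℤ)] := by
        show y % 4 = (1 : ℤ) % 4
        norm_num [h4]
      rw [h1 y 0 hc]
      have hc2 : y + 3 * 2 ^ 0 - 1 ≡ 3 * 2 ^ 0 [ZMOD (2 ^ (0 + 2) : ℤ)] := by
        show (y + 3 * 1 - 1) % 4 = (3 * 1 : ℤ) % 4
        omega
      rw [h3 _ 0 hc2]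
      ring
    · have hc : y ≡ 3 * 2 ^ 0 [ZMOD (2 ^ (0 + 2) : ℤ)] := by
        show y % 4 = (3 * 1 : ℤ) % 4
        omega
      rw [h3 y 0 hc]
      have hc2 : y - 2 ^ 0 - 1 ≡ 2 ^ 0 [ZMOD (2 ^ (0 + 2) : ℤ)] := by
        show (y - 1 - 1) % 4 = (1 : ℤ) % 4
        omega
      rw [h1 _ 0 hc2]
      ring
  -- f x is always odd.
  have hodd : ∀ x : ℤ, Odd (f x) := by
    intro x
    by_cases hx : x = 0
    · rw [hx, h0]; decide
    · obtain ⟨n, m, hm, rfl⟩ := exists_pow_mul_odd x hx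
      obtain ⟨t, ht⟩ := hm
      have h4 : m % 4 = 1 ∨ m % 4 = 3 := by omega
      rcases h4 with h4 | h4
      · obtain ⟨k, hk⟩ : ∃ k, m = 4 * k + 1 := ⟨(m - 1) / 4, by omega⟩
        have hc : 2 ^ n * m ≡ 2 ^ n [ZMOD (2 ^ (n + 2) : ℤ)] := by
          rw [Int.modEq_iff_dvd]
          exact ⟨-k, by rw [hk]; ring⟩
        rw [h1 _ n hc, hk]
        exact ⟨2 ^ n * (2 * k + 2) - 1, by ring⟩
      · obtain ⟨k, hk⟩ : ∃ k, m = 4 * k + 3 := ⟨(m - 3) / 4, by omega⟩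
        have hc : 2 ^ n * m ≡ 3 * 2 ^ n [ZMOD (2 ^ (n + 2) : ℤ)] := by
          rw [Int.modEq_iff_dvd]
          exact ⟨-k, by rw [hk]; ring⟩
        rw [h3 _ n hc, hk]
        exact ⟨2 ^ n * (2 * k + 1) - 1, by ring⟩
  intro x
  exact key (f x) (hodd x)
end

section
/- In the transformation semigroup F generated by the automaton I (states s,f with φ(s)=⟨e,e⟩σ, φ(f)=⟨s,f⟩ζ), define f₁ = s, f₂ = f, f_n = f_{n-2}f_{n-1}. Then for n ≥ 3 the decompositions satisfy: φ(f_{2n}) = ⟨f_{2n-1}, f₄f₆⋯f_{2n-2}⟩ζ and for n ≥ 2, φ(f_{2n+1}) = ⟨f_{2n}, f₂f₅f₇⋯f_{2n-1}⟩ζ. -/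
/-- The transformation of `{0,1}*` given by the state `s` of the automaton `I`:
it flips the first letter (`φ(s) = ⟨e,e⟩σ`).  Letters: `false = 0`, `true = 1`. -/
def sAct : List Bool → List Bool
  | [] => []
  | a :: w => (!a) :: w

/-- The transformation of `{0,1}*` given by the state `f` of the automaton `I`
(`φ(f) = ⟨s,f⟩ζ`): `0w ↦ 0·w^s` and `1w ↦ 0·w^f`. -/
def fAct : List Bool → List Bool
  | [] => []
  | false :: w => false :: sAct w
  | true :: w => false :: fAct w

/-- The elements `f_n` of the semigroup: `f₁ = s`, `f₂ = f`,
`f_n = f_{n-2} f_{n-1}` (products written left-to-right). -/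
def fA : ℕ → List Bool → List Bool
  | 0 => id
  | 1 => sAct
  | 2 => fAct
  | (n + 3) => fun w => fA (n + 2) (fA (n + 1) w)

/-- The left-to-right product `f_{i₁} f_{i₂} ⋯ f_{i_k}` of the elements `f_i`
along a list of indices. -/
def prodL (l : List ℕ) (w : List Bool) : List Bool :=
  l.foldl (fun v i => fA i v) w

/-- Membership in the semigroup `F` generated by `s` and `f`: `g` is a nonempty
product of the generators (`false` stands for the generator `s`, `true` for `f`;
products are written left-to-right). -/
def inF (g : List Bool → List Bool) : Prop :=
  ∃ u : List Bool, u ≠ [] ∧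
    (fun w => u.foldl (fun v a => if a then fAct v else sAct v) w) = g

/-- The transformation with decomposition `⟨g₀,g₁⟩ζ`:
`0·w ↦ 0·w^{g₀}` and `1·w ↦ 0·w^{g₁}`. -/
def decZ (g₀ g₁ : List Bool → List Bool) : List Bool → List Bool
  | [] => []
  | false :: w => false :: g₀ w
  | true :: w => false :: g₁ w

/- ### Auxiliary lemmas -/

@[simp] lemma sAct_cons (a : Bool) (w : List Bool) : sAct (a :: w) = (!a) :: w := rfl
@[simp] lemma fAct_false (w : List Bool) : fAct (false :: w) = false :: sAct w := rfl
@[simp] lemma fAct_true (w : List Bool) : fAct (true :: w) = false :: fAct w := rfl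
@[simp] lemma decZ_false (g₀ g₁ : List Bool → List Bool) (w : List Bool) :
    decZ g₀ g₁ (false :: w) = false :: g₀ w := rfl
@[simp] lemma decZ_true (g₀ g₁ : List Bool → List Bool) (w : List Bool) :
    decZ g₀ g₁ (true :: w) = false :: g₁ w := rfl

/-- `s` is an involution. -/
@[simp] lemma ss (w : List Bool) : sAct (sAct w) = w := by
  rcases w with _ | ⟨a, v⟩ <;> simp [sAct]

/-- The relation `f³ = f`. -/
@[simp] lemma fff (w : List Bool) : fAct (fAct (fAct w)) = fAct w := by
  rcases w with _ | ⟨a, v⟩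
  · rfl
  · cases a <;> simp

/-- Product rule for decompositions with trivial root action:
`⟨a,b⟩ζ · ⟨c,d⟩ζ = ⟨ac, bc⟩ζ`. -/
lemma decZ_comp (a b c d : List Bool → List Bool) (w : List Bool) :
    decZ c d (decZ a b w) = decZ (fun v => c (a v)) (fun v => c (b v)) w := by
  rcases w with _ | ⟨x, v⟩
  · rfl
  · cases x <;> rfl

lemma fA2_eq (w : List Bool) : fA 2 w = fAct w := rfl
lemma fA4_eq (w : List Bool) : fA 4 w = fAct (sAct (fAct w)) := rfl
lemma fA5_eq (w : List Bool) : fA 5 w = fAct (sAct (fAct (fAct (sAct w)))) := rfl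

/-- The product `f₄f₆⋯f_{4+2(k-1)}`: the second component of the even
decomposition, with `k = n - 2`. -/
def Pfun (k : ℕ) : List Bool → List Bool :=
  prodL ((List.range k).map (fun j => 4 + 2 * j))

/-- The product `f₂f₅f₇⋯f_{5+2(k-1)}`: the second component of the odd
decomposition, with `k = n - 2`. -/
def Qfun (k : ℕ) : List Bool → List Bool :=
  prodL (2 :: (List.range k).map (fun j => 5 + 2 * j))

lemma Pfun_succ (k : ℕ) : Pfun (k+1) = fun w => fA (2*k+4) (Pfun k w) := by
  funext w
  simp only [Pfun, prodL, List.range_succ, List.map_append, List.map_cons, List.map_nil,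
    List.foldl_append, List.foldl_cons, List.foldl_nil]
  congr 1
  omega

lemma Qfun_succ (k : ℕ) : Qfun (k+1) = fun w => fA (2*k+5) (Qfun k w) := by
  funext w
  simp only [Qfun, prodL, List.range_succ, List.map_append, List.map_cons, List.map_nil,
    List.foldl_append, List.foldl_cons, List.foldl_nil]
  congr 1
  omega

/-- Base case: `φ(f₅) = ⟨f₄, f₂⟩ζ`. -/
lemma base_odd : fA 5 = decZ (fA 4) (Qfun 0) := by
  funext w
  rcases w with _ | ⟨a, v⟩
  · rfl
  · cases a <;> simp [fA5_eq, fA4_eq, fA2_eq, Qfun, prodL]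

/-- Base case: `φ(f₆) = ⟨f₅, f₄⟩ζ`. -/
lemma base_even : fA 6 = decZ (fA 5) (Pfun 1) := by
  funext w
  rcases w with _ | ⟨a, v⟩
  · rfl
  · cases a <;>
      simp [show ∀ u, fA 6 u = fA 5 (fA 4 u) from fun _ => rfl, fA5_eq, fA4_eq,
        Pfun, prodL, List.range_succ]

/-- The joint induction: `φ(f_{2k+6}) = ⟨f_{2k+5}, f₄⋯f_{2k+4}⟩ζ` and
`φ(f_{2k+5}) = ⟨f_{2k+4}, f₂f₅⋯f_{2k+3}⟩ζ`. -/
lemma main (k : ℕ) :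
    fA (2*k+6) = decZ (fA (2*k+5)) (Pfun (k+1)) ∧
    fA (2*k+5) = decZ (fA (2*k+4)) (Qfun k) := by
  induction k with
  | zero => exact ⟨base_even, base_odd⟩
  | succ k ih =>
    obtain ⟨hE, hO⟩ := ih
    have e4 : fA (2*(k+1)+4) = fun v => fA (2*k+5) (fA (2*k+4) v) := rfl
    have e5 : fA (2*(k+1)+5) = fun v => fA (2*(k+1)+4) (fA (2*(k+1)+3) v) := rfl
    have hO' : fA (2*(k+1)+5) = decZ (fA (2*(k+1)+4)) (Qfun (k+1)) := by
      funext w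
      calc fA (2*(k+1)+5) w = fA (2*k+6) (fA (2*k+5) w) := rfl
        _ = decZ (fA (2*k+5)) (Pfun (k+1)) (decZ (fA (2*k+4)) (Qfun k) w) := by
            rw [hE, hO]
        _ = decZ (fun v => fA (2*k+5) (fA (2*k+4) v))
              (fun v => fA (2*k+5) (Qfun k v)) w := decZ_comp _ _ _ _ w
        _ = decZ (fA (2*(k+1)+4)) (Qfun (k+1)) w := by rw [Qfun_succ, e4]
    refine ⟨?_, hO'⟩
    have eP : Pfun (k+2) = fun v => fA (2*(k+1)+4) (Pfun (k+1) v) := Pfun_succ (k+1)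
    funext w
    calc fA (2*(k+1)+6) w = fA (2*(k+1)+5) (fA (2*k+6) w) := rfl
      _ = decZ (fA (2*(k+1)+4)) (Qfun (k+1)) (decZ (fA (2*k+5)) (Pfun (k+1)) w) := by
          rw [hO', hE]
      _ = decZ (fun v => fA (2*(k+1)+4) (fA (2*k+5) v))
            (fun v => fA (2*(k+1)+4) (Pfun (k+1) v)) w := decZ_comp _ _ _ _ w
      _ = decZ (fA (2*(k+1)+5)) (Pfun (k+2)) w := by
          rw [eP]
          rfl

/-- The decompositions `φ(f_{2n}) = ⟨f_{2n-1}, f₄f₆⋯f_{2n-2}⟩ζ` for `n ≥ 3`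
and `φ(f_{2n+1}) = ⟨f_{2n}, f₂f₅f₇⋯f_{2n-1}⟩ζ` for `n ≥ 2`. -/
theorem fA_decomposition :
    (∀ n : ℕ, 3 ≤ n → fA (2 * n) =
      decZ (fA (2 * n - 1)) (prodL ((List.range (n - 2)).map (fun j => 4 + 2 * j)))) ∧
    (∀ n : ℕ, 2 ≤ n → fA (2 * n + 1) =
      decZ (fA (2 * n)) (prodL (2 :: (List.range (n - 2)).map (fun j => 5 + 2 * j)))) := by
  constructor
  · intro n hn
    obtain ⟨k, rfl⟩ : ∃ k, n = k + 3 := ⟨n - 3, by omega⟩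
    rw [show 2 * (k + 3) - 1 = 2*k+5 by omega, show (k + 3) - 2 = k + 1 by omega,
      show 2 * (k + 3) = 2*k+6 by ring]
    exact (main k).1
  · intro n hn
    obtain ⟨k, rfl⟩ : ∃ k, n = k + 2 := ⟨n - 2, by omega⟩
    rw [show 2 * (k + 2) + 1 = 2*k+5 by omega, show 2 * (k + 2) = 2*k+4 by ring,
      show (k + 2) - 2 = k by omega]
    exact (main k).2
end

section
/- In the semigroup F generated by the automaton I, the relations r_n = r'_n hold for all n ≥ 1, where r₁ = s², r'₁ = e, r_n = f_{n+1}f_n², and r'_n = f_{n%2+1}(f_{n%2+5}f_{n%2+7}⋯f_{n-1}f_{n+1})f_n. -/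
theorem sAct_involutive : Function.Involutive sAct
  | [] => rfl
  | a :: w => by simp [sAct]

theorem fAct_fAct_false_cons (w : List Bool) : fAct (fAct (false :: w)) = false :: w := by
  simp [fAct, sAct_involutive w]

theorem fAct_fAct_fAct : ∀ w, fAct (fAct (fAct w)) = fAct w
  | [] => rfl
  | false :: w => fAct_fAct_false_cons (sAct w)
  | true :: w => fAct_fAct_false_cons (fAct w)

theorem fA_nil (n : ℕ) : fA n [] = [] := by
  induction n using fA.induct with
  | case4 n ih₁ ih₂ => simp only [fA, ih₁, ih₂]
  | _ => rfl

/-- The section of `f_n` at the letter `1`: `φ(f_n) = ⟨f_{n-1}, fSecOne n⟩ζ` for `n ≥ 2`. -/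
def fSecOne : ℕ → List Bool → List Bool
  | 0 => id
  | 1 => id
  | 2 => fAct
  | 3 => sAct
  | (n + 4) => fun w => fA (n + 2) (fSecOne (n + 2) w)

theorem fA_cons (n : ℕ) (x : Bool) (w : List Bool) :
    fA (n + 2) (x :: w) = false :: if x then fSecOne (n + 2) w else fA (n + 1) w := by
  induction n using Nat.twoStepInduction generalizing x w with
  | zero => cases x <;> rfl
  | one => cases x <;> rfl
  | more n ih₀ ih₁ =>
    show fA (n + 3) (fA (n + 2) (x :: w)) = _
    rw [ih₀, ih₁]
    cases x <;> rfl

theorem prodL_cons (i : ℕ) (l : List ℕ) (w : List Bool) :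
    prodL (i :: l) w = prodL l (fA i w) := rfl

theorem prodL_append (l₁ l₂ : List ℕ) (w : List Bool) :
    prodL (l₁ ++ l₂) w = prodL l₂ (prodL l₁ w) :=
  List.foldl_append

theorem prodL_nil_right (l : List ℕ) : prodL l [] = [] := by
  induction l with
  | nil => rfl
  | cons i l ih => rw [prodL_cons, fA_nil, ih]

theorem prodL_false_cons {l : List ℕ} (hl : ∀ i ∈ l, 2 ≤ i) (w : List Bool) :
    prodL l (false :: w) = false :: prodL (l.map (· - 1)) w := by
  induction l generalizing w with
  | nil => rfl
  | cons i l ih =>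
    obtain ⟨n, rfl⟩ : ∃ n, i = n + 2 := ⟨i - 2, by have := hl i List.mem_cons_self; omega⟩
    rw [prodL_cons, fA_cons, if_neg Bool.false_ne_true, ih (by grind)]
    rfl

theorem prodL_range'_false_cons (a k b : ℕ) (w : List Bool) :
    prodL (List.range' (a + 2) k 2 ++ [b + 2]) (false :: w) =
      false :: prodL (List.range' (a + 1) k 2 ++ [b + 1]) w := by
  rw [prodL_false_cons (by grind [List.mem_range']), List.map_append,
    List.map_sub_range' (by omega)]
  rfl

theorem fA_add_three_fA_add_three (n : ℕ) (w : List Bool) :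
    fA (n + 3) (fA (n + 3) w) = fA (n + 4) (fA (n + 1) w) := by
  match n with
  | 0 => rfl
  | n + 1 => rfl

theorem fSecOne_five (w : List Bool) : fSecOne 5 w = fAct w :=
  congrArg fAct (sAct_involutive w)

theorem fA_fSecOne_add_five (n : ℕ) (w : List Bool) :
    fA (n + 3) (fSecOne (n + 5) w) = fA (n + 4) (fA (n + 1) (fSecOne (n + 3) w)) :=
  fA_add_three_fA_add_three n _

theorem fA_fSecOne_even (k : ℕ) (w : List Bool) :
    fA (2 * k + 2) (fSecOne (2 * k + 4) w) = prodL (2 :: List.range' 5 k 2) w := by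
  induction k with
  | zero => exact fAct_fAct_fAct w
  | succ k ih =>
    calc fA (2 * (k + 1) + 2) (fSecOne (2 * (k + 1) + 4) w)
        = fA (2 * k + 5) (fA (2 * k + 2) (fSecOne (2 * k + 4) w)) := fA_fSecOne_add_five _ w
      _ = prodL (2 :: List.range' 5 (k + 1) 2) w := by
        rw [ih, List.range'_concat, ← List.cons_append, prodL_append]
        exact congrFun (congrArg fA (by ring)) _

theorem fA_fSecOne_odd (k : ℕ) (w : List Bool) :
    fA (2 * k + 3) (fSecOne (2 * k + 5) w) = prodL (4 :: List.range' 6 k 2) w := by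
  induction k with
  | zero => exact congrArg (fA 3) (fSecOne_five w)
  | succ k ih =>
    calc fA (2 * (k + 1) + 3) (fSecOne (2 * (k + 1) + 5) w)
        = fA (2 * k + 6) (fA (2 * k + 3) (fSecOne (2 * k + 5) w)) := fA_fSecOne_add_five _ w
      _ = prodL (4 :: List.range' 6 (k + 1) 2) w := by
        rw [ih, List.range'_concat, ← List.cons_append, prodL_append]
        exact congrFun (congrArg fA (by ring)) _

theorem fA_two_cons (x : Bool) (w : List Bool) :
    fA 2 (x :: w) = false :: fA (if x then 2 else 1) w := by
  cases x <;> rfl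

theorem fA_five_fA_one_cons (x : Bool) (w : List Bool) :
    fA 5 (fA 1 (x :: w)) = false :: fA (if x then 4 else 2) w := by
  cases x
  · exact congrArg (false :: ·) (fSecOne_five w)
  · rfl

theorem prodL_relator_cons (n : ℕ) (x : Bool) (w : List Bool) :
    prodL [n + 3, n + 2, n + 2] (x :: w) =
      false :: prodL [n + 1, n + 1] (if x then fSecOne (n + 3) w else fA (n + 2) w) := by
  rw [prodL_cons, fA_cons (n + 1), prodL_false_cons (by simp)]
  rfl

theorem relation_odd_of_even {k : ℕ}
    (h : ∀ w, prodL [2 * k + 3, 2 * k + 2, 2 * k + 2] w =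
      prodL (1 :: (List.range' 5 k 2 ++ [2 * k + 2])) w)
    (w : List Bool) :
    prodL [2 * k + 4, 2 * k + 3, 2 * k + 3] w =
      prodL (2 :: (List.range' 6 k 2 ++ [2 * k + 3])) w := by
  rcases w with _ | ⟨x, w⟩
  · simp only [prodL_nil_right]
  rw [prodL_relator_cons, prodL_cons 2, fA_two_cons, prodL_range'_false_cons 4 k (2 * k + 1)]
  congr 1
  cases x
  · exact h w
  · exact (congrArg (prodL [2 * k + 2]) (fA_fSecOne_even k w)).trans
      (prodL_append (2 :: List.range' 5 k 2) [2 * k + 2] w).symm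

theorem relation_even_succ_of_odd {k : ℕ}
    (h : ∀ w, prodL [2 * k + 4, 2 * k + 3, 2 * k + 3] w =
      prodL (2 :: (List.range' 6 k 2 ++ [2 * k + 3])) w)
    (w : List Bool) :
    prodL [2 * k + 5, 2 * k + 4, 2 * k + 4] w =
      prodL (1 :: (List.range' 5 (k + 1) 2 ++ [2 * k + 4])) w := by
  rcases w with _ | ⟨x, w⟩
  · simp only [prodL_nil_right]
  rw [prodL_relator_cons, List.range'_succ, List.cons_append, prodL_cons 1, prodL_cons 5,
    fA_five_fA_one_cons, prodL_range'_false_cons 5 k (2 * k + 2)]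
  congr 1
  cases x
  · exact h w
  · exact (congrArg (prodL [2 * k + 3]) (fA_fSecOne_odd k w)).trans
      (prodL_append (4 :: List.range' 6 k 2) [2 * k + 3] w).symm

theorem relation_even (k : ℕ) (w : List Bool) :
    prodL [2 * k + 3, 2 * k + 2, 2 * k + 2] w =
      prodL (1 :: (List.range' 5 k 2 ++ [2 * k + 2])) w := by
  induction k generalizing w with
  | zero => exact fAct_fAct_fAct (sAct w)
  | succ k ih => exact relation_even_succ_of_odd (relation_odd_of_even ih) w

theorem relation_odd (k : ℕ) (w : List Bool) :
    prodL [2 * k + 4, 2 * k + 3, 2 * k + 3] w =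
      prodL (2 :: (List.range' 6 k 2 ++ [2 * k + 3])) w :=
  relation_odd_of_even (relation_even k) w

theorem map_range_eq_range' (a k : ℕ) :
    (List.range k).map (fun j => a + 2 * j) = List.range' a k 2 :=
  List.ext_getElem (by simp) (by simp)

/-- The relations `r_n = r'_n` hold in `F` for all `n ≥ 1`:
`r₁ = s²` equals `r'₁ = e`, and for `n ≥ 2`,
`r_n = f_{n+1} f_n²` equals
`r'_n = f_{n%2+1} (f_{n%2+5} f_{n%2+7} ⋯ f_{n-1} f_{n+1}) f_n`
(the middle product runs over indices `n%2+5, n%2+7, …, n+1` and is empty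
when `n%2+5 > n+1`). -/
theorem relations_rn :
    (∀ w : List Bool, sAct (sAct w) = w) ∧
    (∀ n : ℕ, 2 ≤ n → ∀ w : List Bool,
      prodL [n + 1, n, n] w =
      prodL ((n % 2 + 1) ::
        ((List.range ((n + 3 - (n % 2 + 5)) / 2)).map (fun j => n % 2 + 5 + 2 * j)
          ++ [n])) w) := by
  refine ⟨sAct_involutive, fun n hn w => ?_⟩
  obtain ⟨k, rfl | rfl⟩ : ∃ k, n = 2 * k + 2 ∨ n = 2 * k + 3 := ⟨(n - 2) / 2, by omega⟩
  · rw [show (2 * k + 2) % 2 = 0 by omega, show (2 * k + 2 + 3 - (0 + 5)) / 2 = k by omega,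
      map_range_eq_range']
    exact relation_even k w
  · rw [show (2 * k + 3) % 2 = 1 by omega, show (2 * k + 3 + 3 - (1 + 5)) / 2 = k by omega,
      map_range_eq_range']
    exact relation_odd k w
end

section
/- The equations sfsf²x = fx and sfy = fsy have no solutions x, y in the semigroup F generated by the automaton I (and no solution with x or y equal to the identity transformation). -/
/-! ### Auxiliary machinery -/

/-- Left-to-right action of a generator word. -/
def act (u : List Bool) (w : List Bool) : List Bool :=
  u.foldl (fun v a => if a then fAct v else sAct v) w

lemma act_nil (w : List Bool) : act [] w = w := rfl

lemma act_cons (a : Bool) (u w : List Bool) :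
    act (a :: u) w = act u (if a then fAct w else sAct w) := rfl

lemma act_append (u t w : List Bool) :
    act (u ++ t) w = act t (act u w) := by
  simp [act, List.foldl_append]

lemma sAct_sAct (v : List Bool) : sAct (sAct v) = v := by
  cases v <;> simp [sAct]

lemma fAct_cons (c : Bool) (x : List Bool) :
    fAct (c :: x) = false :: (if c then fAct x else sAct x) := by
  cases c <;> rfl

lemma sAct_cons_s17 (c : Bool) (x : List Bool) :
    sAct (c :: x) = (!c) :: x := rfl

/-- The chain lemma: peeling a generator word off a common-prefix pair of
`sf`/`fs` type yields a shorter `sf`/`fs` collapse. -/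
lemma chain : ∀ (u t : List Bool) (c : Bool),
    (∀ v, act u (c :: act t (sAct (fAct v))) = act u (c :: act t (fAct (sAct v)))) →
    ∃ t' : List Bool, (∀ v, act t' (sAct (fAct v)) = act t' (fAct (sAct v))) ∧
      t'.count true ≤ u.count true + t.count true := by
  intro u
  induction u with
  | nil =>
      intro t c h
      refine ⟨t, fun v => ?_, by simp⟩
      have := h v
      simp only [act_nil, List.cons.injEq] at this
      exact this.2
  | cons a u' ih =>
      intro t c h
      cases a with
      | false =>
          have h' : ∀ v, act u' ((!c) :: act t (sAct (fAct v)))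
              = act u' ((!c) :: act t (fAct (sAct v))) := by
            intro v
            have := h v
            simpa [act_cons, sAct_cons_s17] using this
          obtain ⟨t', ht', hc⟩ := ih t (!c) h'
          exact ⟨t', ht', by simpa using hc⟩
      | true =>
          have h' : ∀ v, act u' (false :: act (t ++ [c]) (sAct (fAct v)))
              = act u' (false :: act (t ++ [c]) (fAct (sAct v))) := by
            intro v
            have := h v
            simpa [act_cons, fAct_cons, act_append, act] using this
          obtain ⟨t', ht', hc⟩ := ih (t ++ [c]) false h'
          refine ⟨t', ht', ?_⟩
          have h1 : (t ++ [c]).count true ≤ t.count true + 1 := by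
            cases c <;> simp [List.count_append]
          have h2 : (true :: u').count true = u'.count true + 1 := by simp
          omega

/-- No generator word collapses `fs` and `sf`. -/
lemma keyB : ∀ u : List Bool, ∃ v, act u (fAct (sAct v)) ≠ act u (sAct (fAct v)) := by
  -- auxiliary family lemma, with strong-induction hypothesis supplied
  have fam : ∀ (u : List Bool),
      (∀ t : List Bool, t.count true < u.count true →
        ∃ v, act t (fAct (sAct v)) ≠ act t (sAct (fAct v))) →
      (∀ v, act u (false :: sAct v) = act u (true :: fAct v)) →
      (∀ v, act u (false :: fAct v) = act u (true :: sAct v)) → False := by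
    intro u
    induction u with
    | nil =>
        intro _ h1 _
        have := h1 []
        simp [act_nil, sAct, fAct] at this
    | cons a u' ih =>
        cases a with
        | false =>
            intro hlt h1 h2
            refine ih (by simpa using hlt) (fun v => ?_) (fun v => ?_)
            · have := (h2 v).symm
              simpa [act_cons, sAct_cons_s17] using this
            · have := (h1 v).symm
              simpa [act_cons, sAct_cons_s17] using this
        | true =>
            intro hlt h1 h2
            have hc : ∀ v, act u' (false :: act [] (sAct (fAct v)))
                = act u' (false :: act [] (fAct (sAct v))) := by
              intro v
              have := h2 v
              simpa [act_cons, fAct_cons, act_nil] using this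
            obtain ⟨t', ht', hcnt⟩ := chain u' [] false hc
            have hlt' : t'.count true < (true :: u').count true := by
              have h2 : (true :: u').count true = u'.count true + 1 := by simp
              simp at hcnt
              omega
            obtain ⟨v, hv⟩ := hlt t' hlt'
            exact hv (ht' v).symm
  -- strong induction on the number of `f`'s
  suffices H : ∀ n, ∀ u : List Bool, u.count true ≤ n →
      ∃ v, act u (fAct (sAct v)) ≠ act u (sAct (fAct v)) by
    intro u; exact H _ u le_rfl
  intro n
  induction n with
  | zero =>
      intro u hu
      by_contra h
      push_neg at h
      refine fam u (fun t ht => absurd ht (by omega)) (fun v => ?_) (fun v => ?_)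
      · have := h (true :: v)
        simpa [sAct_cons_s17, fAct_cons] using this
      · have := h (false :: v)
        simpa [sAct_cons_s17, fAct_cons] using this
  | succ n ihn =>
      intro u hu
      by_contra h
      push_neg at h
      refine fam u (fun t ht => ihn t (by omega)) (fun v => ?_) (fun v => ?_)
      · have := h (true :: v)
        simpa [sAct_cons_s17, fAct_cons] using this
      · have := h (false :: v)
        simpa [sAct_cons_s17, fAct_cons] using this

lemma get_word {g : List Bool → List Bool} (hg : inF g ∨ g = id) :
    ∃ u : List Bool, act u = g := by
  rcases hg with ⟨u, _, hu⟩ | rfl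
  · exact ⟨u, hu⟩
  · exact ⟨[], rfl⟩

/-- The equations `sfsf²x = fx` and `sfy = fsy` have no solutions `x, y` in
the semigroup `F` (nor with `x` or `y` the identity transformation).
Products are compositions written left-to-right. -/
theorem no_solutions :
    (¬ ∃ x : List Bool → List Bool, (inF x ∨ x = id) ∧
      ∀ w : List Bool, x (fAct (fAct (sAct (fAct (sAct w))))) = x (fAct w)) ∧
    (¬ ∃ y : List Bool → List Bool, (inF y ∨ y = id) ∧
      ∀ w : List Bool, y (fAct (sAct w)) = y (sAct (fAct w))) := by
  constructor
  · rintro ⟨x, hxF, hx⟩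
    obtain ⟨u, rfl⟩ := get_word hxF
    have hc : ∀ t, act u (false :: act [] (sAct (fAct t)))
        = act u (false :: act [] (fAct (sAct t))) := by
      intro t
      have := hx (true :: sAct t)
      simpa [sAct_cons_s17, fAct_cons, sAct_sAct, act_nil] using this
    obtain ⟨t', ht', _⟩ := chain u [] false hc
    obtain ⟨v, hv⟩ := keyB t'
    exact hv (ht' v).symm
  · rintro ⟨y, hyF, hy⟩
    obtain ⟨u, rfl⟩ := get_word hyF
    obtain ⟨v, hv⟩ := keyB u
    exact hv (hy v)
end

section
/- In the semigroup F generated by the automaton I, the element z_n (defined as f₃f₅⋯f_{n+2} for odd n and f₄f₆⋯f_{n+2} for even n) acts as a left-hand zero on words of length n: z_n maps every word u ∈ {0,1}^n to 0^n. -/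
/-- The list of indices of the element `z_n`: `z_n = f₃f₅⋯f_{n+2}` for odd `n`
and `z_n = f₄f₆⋯f_{n+2}` for even `n`. -/
def zIdx (n : ℕ) : List ℕ :=
  if n % 2 = 1 then (List.range ((n + 1) / 2)).map (fun j => 3 + 2 * j)
  else (List.range (n / 2)).map (fun j => 4 + 2 * j)

-- helper lemmas
lemma sAct_length (w : List Bool) : (sAct w).length = w.length := by
  cases w <;> rfl

lemma fAct_length : ∀ w : List Bool, (fAct w).length = w.length
  | [] => rfl
  | false :: w => by simp [fAct, sAct_length]
  | true :: w => by simp [fAct, fAct_length w]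

lemma auto_sAct (v t : List Bool) :
    ∃ r, sAct (v ++ t) = sAct v ++ r ∧ r.length = t.length := by
  cases v with
  | nil => exact ⟨sAct t, rfl, sAct_length t⟩
  | cons a v => exact ⟨t, rfl, rfl⟩

lemma auto_fAct : ∀ v t : List Bool,
    ∃ r, fAct (v ++ t) = fAct v ++ r ∧ r.length = t.length
  | [], t => ⟨fAct t, rfl, fAct_length t⟩
  | false :: v, t => by
      obtain ⟨r, hr, hl⟩ := auto_sAct v t
      exact ⟨r, by simp [fAct, hr], hl⟩
  | true :: v, t => by
      obtain ⟨r, hr, hl⟩ := auto_fAct v t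
      exact ⟨r, by simp [fAct, hr], hl⟩

lemma auto_fA : ∀ (k : ℕ) (v t : List Bool),
    ∃ r, fA k (v ++ t) = fA k v ++ r ∧ r.length = t.length
  | 0, v, t => ⟨t, rfl, rfl⟩
  | 1, v, t => auto_sAct v t
  | 2, v, t => auto_fAct v t
  | (k + 3), v, t => by
      obtain ⟨r, hr, hl⟩ := auto_fA (k + 1) v t
      obtain ⟨r', hr', hl'⟩ := auto_fA (k + 2) (fA (k + 1) v) r
      exact ⟨r', by simp [fA, hr, hr'], hl'.trans hl⟩

lemma auto_prodL : ∀ (l : List ℕ) (v t : List Bool),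
    ∃ r, prodL l (v ++ t) = prodL l v ++ r ∧ r.length = t.length
  | [], v, t => ⟨t, rfl, rfl⟩
  | i :: l, v, t => by
      obtain ⟨r, hr, hl⟩ := auto_fA i v t
      obtain ⟨r', hr', hl'⟩ := auto_prodL l (fA i v) r
      exact ⟨r', by simp [prodL, List.foldl_cons] at hr' ⊢; rw [hr, hr'], hl'.trans hl⟩

lemma rep_cons (j : ℕ) (w : List Bool) :
    List.replicate j false ++ (false :: w) = List.replicate (j + 1) false ++ w := by
  simp [List.replicate_succ', List.append_assoc]

lemma fA_step (j : ℕ) : fA (j + 4) = fun w => fA (j + 3) (fA (j + 2) w) := rfl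

lemma Rf : ∀ (j : ℕ) (w : List Bool),
    fA (j + 2) (List.replicate j false ++ w) = List.replicate j false ++ fAct w
  | 0, w => rfl
  | 1, w => rfl
  | (j + 2), w => by
      show fA (j + 3) (fA (j + 2) (List.replicate (j + 2) false ++ w)) = _
      rw [← rep_cons, ← rep_cons, Rf j (false :: false :: w)]
      rw [show fAct (false :: false :: w) = false :: true :: w from rfl]
      rw [rep_cons, Rf (j + 1) (true :: w)]
      rw [show fAct (true :: w) = false :: fAct w from rfl, rep_cons]

lemma Rsf : ∀ (j : ℕ) (w : List Bool),
    fA (j + 3) (List.replicate j false ++ w) = List.replicate j false ++ fAct (sAct w)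
  | 0, w => rfl
  | (j + 1), w => by
      show fA (j + 3) (fA (j + 2) (List.replicate (j + 1) false ++ w)) = _
      rw [← rep_cons, Rf j (false :: w)]
      rw [show fAct (false :: w) = false :: sAct w from rfl, rep_cons, Rf (j + 1) (sAct w)]

lemma Gfsf (j : ℕ) (w : List Bool) :
    fA (j + 4) (List.replicate j false ++ w)
      = List.replicate j false ++ fAct (sAct (fAct w)) := by
  rw [show (j+4) = (j+1)+3 from rfl]
  show fA (j + 3) (fA (j + 2) (List.replicate j false ++ w)) = _
  rw [Rf j w, Rsf j (fAct w)]

lemma zIdx_step (n : ℕ) : zIdx (n + 2) = zIdx n ++ [n + 4] := by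
  rcases Nat.even_or_odd n with ⟨t, rfl⟩ | ⟨t, rfl⟩
  · unfold zIdx
    rw [if_neg (by omega), if_neg (by omega)]
    rw [show (t + t + 2) / 2 = (t + t) / 2 + 1 by omega, List.range_succ, List.map_append]
    simp; omega
  · unfold zIdx
    rw [if_pos (by omega), if_pos (by omega)]
    rw [show (2 * t + 1 + 2 + 1) / 2 = (2 * t + 1 + 1) / 2 + 1 by omega,
        List.range_succ, List.map_append]
    simp; omega

lemma prodL_snoc (l : List ℕ) (k : ℕ) (w : List Bool) :
    prodL (l ++ [k]) w = fA k (prodL l w) := by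
  simp [prodL, List.foldl_append]

lemma two_len : ∀ r : List Bool, r.length = 2 → ∃ a b, r = [a, b]
  | [a, b], _ => ⟨a, b, rfl⟩
  | [], h => by simp at h
  | [a], h => by simp at h
  | a :: b :: c :: t, h => by simp at h

lemma key : ∀ (n : ℕ) (u : List Bool), u.length = n →
    prodL (zIdx n) u = List.replicate n false
  | 0, u, hu => by
      rw [List.length_eq_zero_iff.mp hu]; rfl
  | 1, u, hu => by
      obtain ⟨a, rfl⟩ := List.length_eq_one_iff.mp hu
      cases a <;> rfl
  | (n + 2), u, hu => by
      have htake : (u.take n).length = n := by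
        rw [List.length_take, hu]; omega
      have ih := key n (u.take n) htake
      obtain ⟨r, hr, hrl⟩ := auto_prodL (zIdx n) (u.take n) (u.drop n)
      rw [List.take_append_drop] at hr
      have hrl2 : r.length = 2 := by rw [hrl, List.length_drop, hu]; omega
      obtain ⟨a, b, rfl⟩ := two_len r hrl2
      rw [zIdx_step, prodL_snoc, hr, ih, Gfsf n [a, b]]
      rw [show fAct (sAct (fAct [a, b])) = [false, false] by cases a <;> cases b <;> rfl]
      rw [show ([false, false] : List Bool) = false :: false :: [] from rfl,
          rep_cons, rep_cons, List.append_nil]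

/-- The element `z_n` acts as a left-hand zero on words of length `n`:
it maps every `u ∈ {0,1}^n` to `0^n`. -/
theorem zn_left_zero (n : ℕ) (u : List Bool) (hu : u.length = n) :
    prodL (zIdx n) u = List.replicate n false :=
  key n u hu
end

section
/- The number of elements of the semigroup F with maximal index k ≥ 3 in normal form is 2·Φ_{k-2}·2^{k-1}, where the normal forms with maximal index k are the words f₁^{α₁} f₃^{α₃}⋯f_{k-2}^{α_{k-2}} f_k f_{k-1}^{β_{k-1}}⋯f₂^{β₂}f₁^{β₁} with α₁, β_j ∈ {0,1} and α_i ∈ {0,1} satisfying α_i α_{i+1} = 0 for 3 ≤ i ≤ k-3. Equivalently: the number of binary sequences (α₃,…,α_{k-2}) with no two consecutive 1's is Φ_{k-2}. -/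
/-- Binary sequences `(α₃, …, α_{k-2})` (encoded as `v : Fin (k-4) → Bool`,
`v j = α_{3+j}`) with no two consecutive `1`'s, i.e. `α_i α_{i+1} = 0` for
`3 ≤ i ≤ k-3`. -/
def NoTwoOnes (m : ℕ) : Type :=
  {v : Fin m → Bool // ∀ i : Fin m, ∀ h : (i : ℕ) + 1 < m,
    ¬(v i = true ∧ v ⟨(i : ℕ) + 1, h⟩ = true)}

noncomputable instance (m : ℕ) : Fintype (NoTwoOnes m) := by
  unfold NoTwoOnes
  classical
  infer_instance

/-!
A word with no two adjacent ones either starts with `0`, followed by any such word one letter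
shorter, or starts with `10`, followed by any such word two letters shorter. So the counts
`c m` satisfy `c (m + 2) = c (m + 1) + c m` with `c 0 = 1`, `c 1 = 2`, i.e. `c m = Φ_{m+2}`.
-/

namespace NoTwoOnes

def NoAdjacentOnes {m : ℕ} (v : Fin m → Bool) : Prop :=
  ∀ i : Fin m, ∀ h : (i : ℕ) + 1 < m, ¬(v i = true ∧ v ⟨(i : ℕ) + 1, h⟩ = true)

variable {m : ℕ}

theorem noAdjacentOnes_of_le_one (hm : m ≤ 1) (v : Fin m → Bool) : NoAdjacentOnes v :=
  fun _ h => by omega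

theorem noAdjacentOnes_iff_tail (v : Fin (m + 1) → Bool) :
    NoAdjacentOnes v ↔
      (v 0 = true → ∀ h : 0 < m, Fin.tail v ⟨0, h⟩ = false) ∧ NoAdjacentOnes (Fin.tail v) := by
  constructor
  · intro hv
    refine ⟨fun h0 h => ?_, fun i h => hv i.succ (by simpa using h)⟩
    simpa [h0, Fin.tail] using hv 0 (by simpa using h)
  · rintro ⟨h0, hv⟩ i h
    cases i using Fin.cases with
    | zero =>
      rintro ⟨h1, h2⟩
      have h3 := h0 h1 (by simpa using h)
      simp_all [Fin.tail, Fin.succ]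
    | succ j => exact hv j (by simpa using h)

def tail (x : NoTwoOnes (m + 1)) : NoTwoOnes m :=
  ⟨Fin.tail x.1, ((noAdjacentOnes_iff_tail x.1).1 x.2).2⟩

def consFalse (w : NoTwoOnes m) : NoTwoOnes (m + 1) :=
  ⟨Fin.cons false w.1, (noAdjacentOnes_iff_tail _).2 ⟨by simp, by rw [Fin.tail_cons]; exact w.2⟩⟩

def consTrueFalse (w : NoTwoOnes m) : NoTwoOnes (m + 2) :=
  ⟨Fin.cons true (consFalse w).1,
    (noAdjacentOnes_iff_tail _).2 ⟨fun _ _ => rfl, by rw [Fin.tail_cons]; exact (consFalse w).2⟩⟩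

theorem tail_consFalse (w : NoTwoOnes m) : tail (consFalse w) = w := rfl

theorem tail_tail_consTrueFalse (w : NoTwoOnes m) : tail (tail (consTrueFalse w)) = w := rfl

theorem consFalse_tail (x : NoTwoOnes (m + 1)) (h0 : x.1 0 = false) : consFalse (tail x) = x :=
  Subtype.ext <| by
    change Fin.cons false (Fin.tail x.1) = x.1
    rw [← h0, Fin.cons_self_tail]

theorem consTrueFalse_tail_tail (x : NoTwoOnes (m + 2)) (h0 : x.1 0 = true) :
    consTrueFalse (tail (tail x)) = x := by
  have h1 : (tail x).1 0 = false := ((noAdjacentOnes_iff_tail x.1).1 x.2).1 h0 (Nat.succ_pos m)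
  apply Subtype.ext
  calc Fin.cons true (consFalse (tail (tail x))).1
      = Fin.cons (x.1 0) (tail x).1 := by rw [consFalse_tail _ h1, h0]
    _ = x.1 := Fin.cons_self_tail _

def succSuccEquiv (m : ℕ) : NoTwoOnes (m + 2) ≃ NoTwoOnes (m + 1) ⊕ NoTwoOnes m where
  toFun x := if x.1 0 then .inr (tail (tail x)) else .inl (tail x)
  invFun := Sum.elim consFalse consTrueFalse
  left_inv x := by
    cases h0 : x.1 0
    · simpa [h0] using consFalse_tail x h0
    · simpa [h0] using consTrueFalse_tail_tail x h0
  right_inv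
    | .inl w => congrArg Sum.inl (tail_consFalse w)
    | .inr w => congrArg Sum.inr (tail_tail_consTrueFalse w)

theorem card_of_le_one (hm : m ≤ 1) : Fintype.card (NoTwoOnes m) = 2 ^ m := by
  rw [Fintype.card_congr (α := NoTwoOnes m)
    (Equiv.subtypeUnivEquiv (noAdjacentOnes_of_le_one hm)), Fintype.card_fun,
    Fintype.card_bool, Fintype.card_fin]

theorem card_eq_fib : ∀ m, Fintype.card (NoTwoOnes m) = Nat.fib (m + 2)
  | 0 | 1 => card_of_le_one (by omega)
  | m + 2 => by
    rw [Fintype.card_congr (succSuccEquiv m), Fintype.card_sum, card_eq_fib (m + 1),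
      card_eq_fib m, Nat.fib_add_two (n := m + 2), add_comm]

end NoTwoOnes

/-- The normal forms with maximal index `k ≥ 3` are the words
`f₁^{α₁} f₃^{α₃} ⋯ f_{k-2}^{α_{k-2}} f_k f_{k-1}^{β_{k-1}} ⋯ f₂^{β₂} f₁^{β₁}`
with `α₁, β_j ∈ {0,1}` and `α_i α_{i+1} = 0`; their number is
`2 · Φ_{k-2} · 2^{k-1}`.  Equivalently, the number of binary sequences
`(α₃, …, α_{k-2})` with no two consecutive `1`'s is `Φ_{k-2}`. -/
theorem count_normal_forms (k : ℕ) (hk : 3 ≤ k) :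
    Fintype.card (Bool × NoTwoOnes (k - 4) × (Fin (k - 1) → Bool)) =
      2 * Nat.fib (k - 2) * 2 ^ (k - 1) ∧
    Fintype.card (NoTwoOnes (k - 4)) = Nat.fib (k - 2) := by
  have hcard : Fintype.card (NoTwoOnes (k - 4)) = Nat.fib (k - 2) := by
    rw [NoTwoOnes.card_eq_fib]
    obtain rfl | hk4 := hk.eq_or_lt
    -- `3 - 4` truncates to `0`, and `Φ₂ = Φ₁`
    · rfl
    · congr 1
      omega
  refine ⟨?_, hcard⟩
  rw [Fintype.card_prod, Fintype.card_prod, hcard, Fintype.card_bool, Fintype.card_fun,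
    Fintype.card_bool, Fintype.card_fin, mul_assoc]
end
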